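/- Let A ∈ ℝ^{m×n} with nonzero rows A_1,…,A_m, let R_A = R_m⋯R_1 be the product of its row reflections, let C have rows C_1,…,C_k, and let R_C denote the product of the row reflections of C. Then the product of row reflections of the stacked matrix [A; C] equals R_C R_A. Moreover, if [A;C]^T has the block Brady–Watt representation, then the lower-triangular W for the stacked matrix is block lower-triangular: W = [[W_1, 0],[2CA^T, W_2]], where W_1, W_2 are the lower-triangular matrices with W_1 + W_1^T = 2AA^T and W_2 + W_2^T = 2CC^T. -/
import Mathlib


open Matrix

/-- The Householder reflection determined by a (nonzero) vector `a`. -/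
noncomputable def reflOf {n : ℕ} (a : Fin n → ℝ) : Matrix (Fin n) (Fin n) ℝ :=
  1 - (2 / (∑ j, a j ^ 2)) • Matrix.vecMulVec a a

/-- The product `R_m ⋯ R_2 R_1` of the Householder reflections of the rows of `A`. -/
noncomputable def reflProd {m n : ℕ} (A : Matrix (Fin m) (Fin n) ℝ) :
    Matrix (Fin n) (Fin n) ℝ :=
  (((List.finRange m).map (fun i => reflOf (A i))).reverse).prod

lemma finRange_add' (m k : ℕ) :
    List.finRange (m + k) =
      (List.finRange m).map (Fin.castAdd k) ++ (List.finRange k).map (Fin.natAdd m) := by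
  apply List.ext_getElem
  · simp
  · intro i h1 h2
    simp only [List.finRange, List.getElem_ofFn, List.getElem_append, List.length_map,
      List.length_ofFn, List.getElem_map]
    split
    · rfl
    · next h =>
      ext
      simp [Fin.natAdd, Nat.add_sub_cancel' (Nat.le_of_not_lt h)]

/-- the product of the row reflections of the stacked matrix
`[A; C]` equals `R_C R_A`; moreover the block lower-triangular matrix
`W = [[W₁, 0], [2CAᵀ, W₂]]`, built from the lower-triangular matrices `W₁, W₂`
with `W₁ + W₁ᵀ = 2AAᵀ` and `W₂ + W₂ᵀ = 2CCᵀ`, satisfies the defining equation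
`W + Wᵀ = 2 [A;C][A;C]ᵀ` for the stacked matrix. -/
theorem stacked_reflections (m k n : ℕ)
    (A : Matrix (Fin m) (Fin n) ℝ) (C : Matrix (Fin k) (Fin n) ℝ)
    (hA : ∀ i, A i ≠ 0) (hC : ∀ i, C i ≠ 0)
    (W1 : Matrix (Fin m) (Fin m) ℝ) (W2 : Matrix (Fin k) (Fin k) ℝ)
    (h1low : ∀ i j : Fin m, i < j → W1 i j = 0)
    (h2low : ∀ i j : Fin k, i < j → W2 i j = 0)
    (hW1 : W1 + W1ᵀ = (2 : ℝ) • (A * Aᵀ))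
    (hW2 : W2 + W2ᵀ = (2 : ℝ) • (C * Cᵀ)) :
    reflProd (Matrix.of (Fin.append (fun i => A i) (fun i => C i))) =
      reflProd C * reflProd A ∧
    Matrix.fromBlocks W1 0 ((2 : ℝ) • (C * Aᵀ)) W2 +
        (Matrix.fromBlocks W1 0 ((2 : ℝ) • (C * Aᵀ)) W2)ᵀ =
      (2 : ℝ) • (Matrix.fromRows A C * (Matrix.fromRows A C)ᵀ) := by
  constructor
  · unfold reflProd
    rw [finRange_add', List.map_append, List.map_map, List.map_map]
    have h1 : ((fun i => reflOf ((Matrix.of (Fin.append (fun i => A i) (fun i => C i))) i)) ∘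
        Fin.castAdd k) = fun i => reflOf (A i) := by
      funext i; exact congrArg reflOf (Fin.append_left _ _ i)
    have h2 : ((fun i => reflOf ((Matrix.of (Fin.append (fun i => A i) (fun i => C i))) i)) ∘
        Fin.natAdd m) = fun i => reflOf (C i) := by
      funext i; exact congrArg reflOf (Fin.append_right _ _ i)
    rw [h1, h2, List.reverse_append, List.prod_append]
  · rw [transpose_fromRows, fromRows_mul_fromCols, fromBlocks_transpose,
      fromBlocks_add, fromBlocks_smul, hW1, hW2, transpose_smul, transpose_mul,
      transpose_transpose, transpose_zero]
    simp
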